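/- If a CNF formula φ is satisfiable, then the string f(φ) belongs to the language L(G) of the unification grammar G: from any consistent assignment making every clause true one can construct a derivation tree of G' with yield f(φ) whose induced constraint set is satisfiable in an acyclic feature graph. -/

import Mathlib

/-- The five-letter terminal alphabet Σ = {♯, 0, 1, p, p̄}. -/
inductive Sig where
  | hash | zero | one | pos | neg
deriving DecidableEq, Repr

instance : Fintype Sig where
  elems := {.hash, .zero, .one, .pos, .neg}
  complete := fun x => by cases x <;> simp

/-- The nonterminals of the regular grammar G'. -/
inductive NTm where
  | S | F | T | A | B
deriving DecidableEq, Repr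

instance : Fintype NTm where
  elems := {.S, .F, .T, .A, .B}
  complete := fun x => by cases x <;> simp

instance : DecidableEq (ContextFreeRule Sig NTm) :=
  fun a b => decidable_of_iff (a.input = b.input ∧ a.output = b.output)
    (by cases a; cases b; simp)

/-- The productions of the right-linear regular grammar G'. -/
def rulesG' : List (ContextFreeRule Sig NTm) := [
  ⟨.S, [.terminal .hash, .nonterminal .F]⟩,
  ⟨.S, [.terminal .hash, .nonterminal .T]⟩,
  ⟨.S, []⟩,
  ⟨.F, [.terminal .zero, .nonterminal .F]⟩,
  ⟨.F, [.terminal .one, .nonterminal .F]⟩,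
  ⟨.F, [.terminal .pos, .nonterminal .F]⟩,
  ⟨.F, [.terminal .neg, .nonterminal .F]⟩,
  ⟨.F, [.terminal .pos, .nonterminal .T]⟩,
  ⟨.F, [.terminal .neg, .nonterminal .T]⟩,
  ⟨.T, [.terminal .zero, .nonterminal .T]⟩,
  ⟨.T, [.terminal .one, .nonterminal .T]⟩,
  ⟨.T, [.terminal .pos, .nonterminal .A]⟩,
  ⟨.T, [.terminal .neg, .nonterminal .A]⟩,
  ⟨.A, [.nonterminal .B]⟩,
  ⟨.A, [.nonterminal .S]⟩,
  ⟨.B, [.terminal .zero, .nonterminal .B]⟩,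
  ⟨.B, [.terminal .one, .nonterminal .B]⟩,
  ⟨.B, [.terminal .pos, .nonterminal .A]⟩,
  ⟨.B, [.terminal .neg, .nonterminal .A]⟩ ]

/-- The regular grammar G' (as a context-free grammar) with start symbol S. -/
def Gp : ContextFreeGrammar Sig := { NT := NTm, initial := NTm.S, rules := rulesG'.toFinset }

/-- A symbol of Σ is a bit, i.e. 0 or 1. -/
def IsBit (c : Sig) : Prop := c = .zero ∨ c = .one

/-- A segment: a (possibly empty) string over {0,1} followed by a single p or p̄. -/
def IsSegment (s : List Sig) : Prop :=
  ∃ u l, s = u ++ [l] ∧ (∀ c ∈ u, IsBit c) ∧ (l = Sig.pos ∨ l = Sig.neg)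

/-- A block: ♯ followed by one or more segments. -/
def IsBlock (b : List Sig) : Prop :=
  ∃ segs : List (List Sig), segs ≠ [] ∧ (∀ s ∈ segs, IsSegment s) ∧ b = Sig.hash :: segs.flatten

/-- The regular language L₀ = (♯((0∪1)*(p∪p̄))⁺)*. -/
def L0 : Set (List Sig) :=
  { w | ∃ bs : List (List Sig), (∀ b ∈ bs, IsBlock b) ∧ w = bs.flatten }

/-- The attributes {assign, new, v, 0, 1} of the feature theory of G. -/
inductive Attr where
  | assign | new | v | a0 | a1
deriving DecidableEq, Repr

/-- The atomic values {+, −}. -/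
inductive Atom where
  | plus | minus
deriving DecidableEq, Repr

/-- A term of a primitive constraint: a feature variable or an atomic value. -/
inductive FTerm where
  | fvar (n : ℕ)
  | atom (a : Atom)

/-- A primitive constraint `p x ≐ q t` (paths written innermost-first:
the head of the list is the attribute applied first). -/
structure FConstraint where
  lpath : List Attr
  lvar : ℕ
  rpath : List Attr
  rtm : FTerm

/-- `p x ≐ q y` for feature variables `x`, `y`. -/
def ceq (p : List Attr) (x : ℕ) (q : List Attr) (y : ℕ) : FConstraint := ⟨p, x, q, .fvar y⟩

/-- `p x ≐ a` for an atomic value `a`. -/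
def cat (p : List Attr) (x : ℕ) (a : Atom) : FConstraint := ⟨p, x, [], .atom a⟩

/-- A finite feature graph on node set `Fin k`: edges labelled by attributes,
at most one outgoing edge per attribute per node, nodes optionally carrying an
atomic value (in which case they have no outgoing edges), and acyclic. -/
structure FeatureGraph (k : ℕ) where
  edge : Fin k → Attr → Option (Fin k)
  val : Fin k → Option Atom
  val_no_edge : ∀ n : Fin k, (val n).isSome = true → ∀ f, edge n f = none
  acyclic : ∀ n : Fin k, ¬ Relation.TransGen (fun a b => ∃ f, edge a f = some b) n n

/-- Follow a path of attributes from a node, if all edges are defined. -/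
def FeatureGraph.follow {k : ℕ} (g : FeatureGraph k) : Fin k → List Attr → Option (Fin k)
  | n, [] => some n
  | n, f :: p => (g.edge n f).bind (fun m => g.follow m p)

/-- A constraint `p x ≐ q t` holds in `g` under the variable assignment `asgn`:
both paths are defined and lead to the same node, resp. to a node carrying
the required atomic value. -/
def FeatureGraph.SatC {k : ℕ} (g : FeatureGraph k) (asgn : ℕ → Fin k) (c : FConstraint) : Prop :=
  match c.rtm with
  | .fvar y => ∃ n, g.follow (asgn c.lvar) c.lpath = some n ∧ g.follow (asgn y) c.rpath = some n
  | .atom a => c.rpath = [] ∧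
      ∃ n, g.follow (asgn c.lvar) c.lpath = some n ∧ g.val n = some a

/-- A constraint set is satisfiable in some acyclic feature graph. -/
def ConsSat (cs : List FConstraint) : Prop :=
  ∃ (k : ℕ) (g : FeatureGraph k) (asgn : ℕ → Fin k), ∀ c ∈ cs, g.SatC asgn c

/-- `DerivC N w i cs`: there is a derivation tree of G' rooted at nonterminal `N`
with terminal yield `w`, whose nonterminal occurrences carry the distinct feature
variables `i, i+1, i+2, …` (root first), inducing the constraint list `cs`
obtained by instantiating the constraint annotating each applied rule of the
unification grammar G at the variables of the corresponding nodes. -/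
inductive DerivC : NTm → List Sig → ℕ → List FConstraint → Prop where
  | sF {w i cs} : DerivC .F w (i+1) cs →
      DerivC .S (.hash :: w) i (ceq [.assign] i [.assign] (i+1) :: cs)
  | sT {w i cs} : DerivC .T w (i+1) cs →
      DerivC .S (.hash :: w) i
        (ceq [.assign] i [.assign] (i+1) :: ceq [.assign] i [.new] (i+1) :: cs)
  | sEps {i} : DerivC .S [] i [cat [.assign, .v] i .plus]
  | f0 {w i cs} : DerivC .F w (i+1) cs →
      DerivC .F (.zero :: w) i (ceq [.assign] i [.assign] (i+1) :: cs)
  | f1 {w i cs} : DerivC .F w (i+1) cs →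
      DerivC .F (.one :: w) i (ceq [.assign] i [.assign] (i+1) :: cs)
  | fp {w i cs} : DerivC .F w (i+1) cs →
      DerivC .F (.pos :: w) i (ceq [.assign] i [.assign] (i+1) :: cs)
  | fn {w i cs} : DerivC .F w (i+1) cs →
      DerivC .F (.neg :: w) i (ceq [.assign] i [.assign] (i+1) :: cs)
  | fpT {w i cs} : DerivC .T w (i+1) cs →
      DerivC .F (.pos :: w) i
        (ceq [.assign] i [.assign] (i+1) :: ceq [.assign] i [.new] (i+1) :: cs)
  | fnT {w i cs} : DerivC .T w (i+1) cs →
      DerivC .F (.neg :: w) i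
        (ceq [.assign] i [.assign] (i+1) :: ceq [.assign] i [.new] (i+1) :: cs)
  | t0 {w i cs} : DerivC .T w (i+1) cs →
      DerivC .T (.zero :: w) i
        (ceq [.assign] i [.assign] (i+1) :: ceq [.a0, .new] i [.new] (i+1) :: cs)
  | t1 {w i cs} : DerivC .T w (i+1) cs →
      DerivC .T (.one :: w) i
        (ceq [.assign] i [.assign] (i+1) :: ceq [.a1, .new] i [.new] (i+1) :: cs)
  | tpA {w i cs} : DerivC .A w (i+1) cs →
      DerivC .T (.pos :: w) i
        (ceq [.assign] i [.assign] (i+1) :: cat [.new, .v] i .plus :: cs)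
  | tnA {w i cs} : DerivC .A w (i+1) cs →
      DerivC .T (.neg :: w) i
        (ceq [.assign] i [.assign] (i+1) :: cat [.new, .v] i .minus :: cs)
  | aB {w i cs} : DerivC .B w (i+1) cs →
      DerivC .A w i (ceq [.assign] i [.assign] (i+1) :: cs)
  | aS {w i cs} : DerivC .S w (i+1) cs →
      DerivC .A w i (ceq [.assign] i [.assign] (i+1) :: cs)
  | b0 {w i cs} : DerivC .B w (i+1) cs →
      DerivC .B (.zero :: w) i (ceq [.assign] i [.assign] (i+1) :: cs)
  | b1 {w i cs} : DerivC .B w (i+1) cs →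
      DerivC .B (.one :: w) i (ceq [.assign] i [.assign] (i+1) :: cs)
  | bpA {w i cs} : DerivC .A w (i+1) cs →
      DerivC .B (.pos :: w) i (ceq [.assign] i [.assign] (i+1) :: cs)
  | bnA {w i cs} : DerivC .A w (i+1) cs →
      DerivC .B (.neg :: w) i (ceq [.assign] i [.assign] (i+1) :: cs)

/-- The language L(G) of the unification grammar G: strings that admit a derivation
tree of G' from the start symbol S whose induced constraint set is satisfiable in
an acyclic feature graph. -/
def LG : Set (List Sig) := { w | ∃ cs, DerivC .S w 0 cs ∧ ConsSat cs }

/-- A literal: a binary index `b : List Bool` (intended nonempty) of a propositional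
variable together with a sign (`true` = positive, `false` = negative). -/
abbrev Lit := List Bool × Bool

/-- A clause: a list of literals (intended nonempty). -/
abbrev Clause := List Lit

/-- A CNF formula: a list of clauses (intended nonempty). -/
abbrev CNF := List Clause

/-- Well-formedness of a CNF formula: the formula is a nonempty list of nonempty
clauses and every literal has a nonempty binary index. -/
def CNF.WF (φ : CNF) : Prop := φ ≠ [] ∧ ∀ γ ∈ φ, γ ≠ [] ∧ ∀ l ∈ γ, l.1 ≠ []

/-- A literal is true under the assignment `g`. -/
def LitTrue (g : List Bool → Bool) (l : Lit) : Prop := g l.1 = l.2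

/-- Satisfiability of a CNF formula: some assignment makes at least one literal
of every clause true. -/
def CNFSat (φ : CNF) : Prop := ∃ g : List Bool → Bool, ∀ γ ∈ φ, ∃ l ∈ γ, LitTrue g l

/-- Translation of bits to terminal symbols. -/
def bitSig (b : Bool) : Sig := if b then .one else .zero

/-- The reduction on literals: f((b,+)) = b·p and f((b,−)) = b·p̄. -/
def fLit (l : Lit) : List Sig := l.1.map bitSig ++ [if l.2 then Sig.pos else Sig.neg]

/-- The reduction on clauses: f(l₁ ∨ … ∨ lₙ) = f(l₁)·…·f(lₙ). -/
def fClause (γ : Clause) : List Sig := (γ.map fLit).flatten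

/-- The reduction f on CNF formulas: f(γ₁ ∧ … ∧ γ_m) = ♯·f(γ₁)·…·♯·f(γ_m). -/
def fCNF (φ : CNF) : List Sig := (φ.map (fun γ => Sig.hash :: fClause γ)).flatten

namespace SatLG

/-! ### Encoding of binary strings as trie positions -/

def MM (D : ℕ) : ℕ := 2 ^ (D + 1)

lemma MM_pos (D : ℕ) : 0 < MM D := Nat.pow_pos (by norm_num)

def encF (n : ℕ) (b : List Bool) : ℕ :=
  b.foldl (fun a bit => 2 * a + 1 + (cond bit 1 0)) n

lemma encF_nil (n : ℕ) : encF n [] = n := rfl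

lemma encF_cons (n : ℕ) (bit : Bool) (b : List Bool) :
    encF n (bit :: b) = encF (2 * n + 1 + cond bit 1 0) b := rfl

lemma encF_append (n : ℕ) (b : List Bool) (bit : Bool) :
    encF n (b ++ [bit]) = 2 * encF n b + 1 + cond bit 1 0 := by
  simp [encF]

lemma encF_le (n : ℕ) (b : List Bool) : n ≤ encF n b := by
  induction b generalizing n with
  | nil => simp [encF]
  | cons bit b ih =>
    rw [encF_cons]
    exact le_trans (by have : 0 ≤ cond bit 1 0 := Nat.zero_le _; omega)
      (ih (2 * n + 1 + cond bit 1 0))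

def dec : ℕ → List Bool
  | 0 => []
  | (n + 1) => dec (n / 2) ++ [decide (n % 2 = 1)]
decreasing_by exact Nat.lt_succ_of_le (Nat.div_le_self n 2)

lemma dec_zero : dec 0 = [] := by simp [dec]

lemma dec_succ (n : ℕ) : dec (n + 1) = dec (n / 2) ++ [decide (n % 2 = 1)] := by
  rw [dec]

lemma dec_encF (b : List Bool) : dec (encF 0 b) = b := by
  induction b using List.reverseRecOn with
  | nil => simp [encF, dec_zero]
  | append_singleton b bit ih =>
    rw [encF_append]
    cases bit
    · simp only [Bool.cond_false]
      have h : 2 * encF 0 b + 1 + 0 = (2 * encF 0 b) + 1 := by omega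
      rw [h, dec_succ]
      have h1 : (2 * encF 0 b) / 2 = encF 0 b := by omega
      have h2 : (2 * encF 0 b) % 2 = 0 := by omega
      rw [h1, ih, h2]
      simp
    · simp only [Bool.cond_true]
      have h : 2 * encF 0 b + 1 + 1 = (2 * encF 0 b + 1) + 1 := by omega
      rw [h, dec_succ]
      have h1 : (2 * encF 0 b + 1) / 2 = encF 0 b := by omega
      have h2 : (2 * encF 0 b + 1) % 2 = 1 := by omega
      rw [h1, ih, h2]
      simp

lemma encF_bound (b : List Bool) : encF 0 b + 2 ≤ 2 ^ (b.length + 1) := by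
  induction b using List.reverseRecOn with
  | nil => simp [encF]
  | append_singleton b bit ih =>
    rw [encF_append]
    have h2 : (2 : ℕ) ^ ((b ++ [bit]).length + 1) = 2 * 2 ^ (b.length + 1) := by
      simp [List.length_append, pow_succ]; ring
    rw [h2]
    cases bit <;> simp only [Bool.cond_true, Bool.cond_false] <;> omega

lemma encF_lt_MM {D : ℕ} {b : List Bool} (hb : b.length ≤ D) : encF 0 b < MM D := by
  have h1 := encF_bound b
  have h2 : (2 : ℕ) ^ (b.length + 1) ≤ 2 ^ (D + 1) :=
    Nat.pow_le_pow_right (by norm_num) (by omega)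
  unfold MM
  omega

/-! ### The concrete feature graph -/

def KK (D : ℕ) : ℕ := 2 * MM D + 2

def tnode (D n : ℕ) : Fin (KK D) :=
  ⟨n % MM D, by have h := Nat.mod_lt n (MM_pos D); unfold KK; omega⟩

def cnode (D n : ℕ) : Fin (KK D) :=
  ⟨MM D + n % MM D, by have h := Nat.mod_lt n (MM_pos D); unfold KK; omega⟩

def aP (D : ℕ) : Fin (KK D) := ⟨2 * MM D, by unfold KK; omega⟩
def aM (D : ℕ) : Fin (KK D) := ⟨2 * MM D + 1, by unfold KK; omega⟩

lemma tnode_val {D n : ℕ} (hn : n < MM D) : (tnode D n).val = n := by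
  simp [tnode, Nat.mod_eq_of_lt hn]

lemma cnode_val {D n : ℕ} (hn : n < MM D) : (cnode D n).val = MM D + n := by
  simp [cnode, Nat.mod_eq_of_lt hn]

def ged (D : ℕ) (gN : ℕ → Bool) (x : Fin (KK D)) (f : Attr) : Option (Fin (KK D)) :=
  if x.val < MM D then
    if f = .v then some (if gN x.val then aP D else aM D) else none
  else if x.val < 2 * MM D then
    if f = .assign then some (tnode D 0)
    else if f = .new then some (tnode D (x.val - MM D))
    else if f = .a0 then
      (if 2 * (x.val - MM D) + 1 < MM D then some (cnode D (2 * (x.val - MM D) + 1)) else none)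
    else if f = .a1 then
      (if 2 * (x.val - MM D) + 2 < MM D then some (cnode D (2 * (x.val - MM D) + 2)) else none)
    else none
  else none

def gvalf (D : ℕ) (x : Fin (KK D)) : Option Atom :=
  if x.val = 2 * MM D then some .plus else if x.val = 2 * MM D + 1 then some .minus else none

lemma ged_t_v {D : ℕ} (gN : ℕ → Bool) {n : ℕ} (hn : n < MM D) :
    ged D gN (tnode D n) .v = some (if gN n then aP D else aM D) := by
  have h := tnode_val (D := D) hn
  unfold ged
  rw [if_pos (by omega), if_pos rfl, h]

lemma ged_c_assign {D : ℕ} (gN : ℕ → Bool) {n : ℕ} (hn : n < MM D) :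
    ged D gN (cnode D n) .assign = some (tnode D 0) := by
  have h := cnode_val (D := D) hn
  unfold ged
  rw [if_neg (by omega), if_pos (by omega), if_pos rfl]

lemma ged_c_new {D : ℕ} (gN : ℕ → Bool) {n : ℕ} (hn : n < MM D) :
    ged D gN (cnode D n) .new = some (tnode D n) := by
  have h := cnode_val (D := D) hn
  unfold ged
  rw [if_neg (by omega), if_pos (by omega), if_neg (by simp), if_pos rfl, h]
  simp

lemma ged_c_a0 {D : ℕ} (gN : ℕ → Bool) {n : ℕ} (hn : n < MM D) (h2 : 2 * n + 1 < MM D) :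
    ged D gN (cnode D n) .a0 = some (cnode D (2 * n + 1)) := by
  have h := cnode_val (D := D) hn
  unfold ged
  rw [if_neg (by omega), if_pos (by omega), if_neg (by simp), if_neg (by simp), if_pos rfl, h]
  simp only [Nat.add_sub_cancel_left]
  rw [if_pos h2]

lemma ged_c_a1 {D : ℕ} (gN : ℕ → Bool) {n : ℕ} (hn : n < MM D) (h2 : 2 * n + 2 < MM D) :
    ged D gN (cnode D n) .a1 = some (cnode D (2 * n + 2)) := by
  have h := cnode_val (D := D) hn
  unfold ged
  rw [if_neg (by omega), if_pos (by omega), if_neg (by simp), if_neg (by simp),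
    if_neg (by simp), if_pos rfl, h]
  simp only [Nat.add_sub_cancel_left]
  rw [if_pos h2]

def rk (D : ℕ) (x : Fin (KK D)) : ℕ :=
  if x.val < MM D then MM D else if x.val < 2 * MM D then x.val - MM D else 2 * MM D + 5

lemma ged_rk {D : ℕ} {gN : ℕ → Bool} {a b : Fin (KK D)} {f : Attr}
    (h : ged D gN a f = some b) : rk D a < rk D b := by
  have hM := MM_pos D
  unfold ged at h
  by_cases h1 : a.val < MM D
  · rw [if_pos h1] at h
    by_cases hv : f = Attr.v
    · rw [if_pos hv, Option.some_inj] at h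
      have hb : 2 * MM D ≤ b.val := by
        by_cases hg : gN a.val
        · rw [if_pos hg] at h; rw [← h]; rfl
        · rw [if_neg hg] at h; rw [← h]; simp [aM]
      unfold rk; split_ifs <;> omega
    · rw [if_neg hv] at h; cases h
  · rw [if_neg h1] at h
    by_cases h2 : a.val < 2 * MM D
    · rw [if_pos h2] at h
      by_cases hf1 : f = Attr.assign
      · rw [if_pos hf1, Option.some_inj] at h
        have hb : b.val = 0 := by rw [← h]; exact tnode_val hM
        unfold rk; split_ifs <;> omega
      · rw [if_neg hf1] at h
        by_cases hf2 : f = Attr.new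
        · rw [if_pos hf2, Option.some_inj] at h
          have hb : b.val = a.val - MM D := by rw [← h]; exact tnode_val (by omega)
          unfold rk; split_ifs <;> omega
        · rw [if_neg hf2] at h
          by_cases hf3 : f = Attr.a0
          · rw [if_pos hf3] at h
            by_cases h3 : 2 * (a.val - MM D) + 1 < MM D
            · rw [if_pos h3, Option.some_inj] at h
              have hb : b.val = MM D + (2 * (a.val - MM D) + 1) := by
                rw [← h]; exact cnode_val h3
              unfold rk; split_ifs <;> omega
            · rw [if_neg h3] at h; cases h
          · rw [if_neg hf3] at h
            by_cases hf4 : f = Attr.a1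
            · rw [if_pos hf4] at h
              by_cases h3 : 2 * (a.val - MM D) + 2 < MM D
              · rw [if_pos h3, Option.some_inj] at h
                have hb : b.val = MM D + (2 * (a.val - MM D) + 2) := by
                  rw [← h]; exact cnode_val h3
                unfold rk; split_ifs <;> omega
              · rw [if_neg h3] at h; cases h
            · rw [if_neg hf4] at h; cases h
    · rw [if_neg h2] at h; cases h

def FG (D : ℕ) (gN : ℕ → Bool) : FeatureGraph (KK D) where
  edge := ged D gN
  val := gvalf D
  val_no_edge := by
    intro x h f
    have hx : 2 * MM D ≤ x.val := by
      unfold gvalf at h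
      split_ifs at h with hh1 hh2
      · omega
      · omega
      · simp at h
    unfold ged
    rw [if_neg (by omega), if_neg (by omega)]
  acyclic := by
    intro n hcyc
    have key : ∀ a b : Fin (KK D),
        Relation.TransGen (fun a b => ∃ f, ged D gN a f = some b) a b → rk D a < rk D b := by
      intro a b h
      induction h with
      | single h => obtain ⟨f, hf⟩ := h; exact ged_rk hf
      | tail _ h2 ih => obtain ⟨f, hf⟩ := h2; exact lt_trans ih (ged_rk hf)
    exact absurd (key n n hcyc) (lt_irrefl _)

lemma follow_one {k : ℕ} (g : FeatureGraph k) (x : Fin k) (f : Attr) :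
    g.follow x [f] = g.edge x f := by
  unfold FeatureGraph.follow
  cases g.edge x f <;> simp [FeatureGraph.follow]

lemma follow_two {k : ℕ} (g : FeatureGraph k) (x : Fin k) (f1 f2 : Attr) :
    g.follow x [f1, f2] = (g.edge x f1).bind (fun y => g.edge y f2) := by
  unfold FeatureGraph.follow
  cases g.edge x f1 <;> simp [FeatureGraph.follow, follow_one]

/-! ### Satisfaction of the primitive constraints in the concrete graph -/

section Sat

variable {D : ℕ} {gN : ℕ → Bool} {n n' i j : ℕ} {asgn : ℕ → Fin (KK D)}

lemma satAA (hn : n < MM D) (hn' : n' < MM D)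
    (hi : asgn i = cnode D n) (hj : asgn j = cnode D n') :
    (FG D gN).SatC asgn (ceq [.assign] i [.assign] j) := by
  refine ⟨tnode D 0, ?_, ?_⟩ <;> simp only [ceq]
  · rw [hi, follow_one]; exact ged_c_assign gN hn
  · rw [hj, follow_one]; exact ged_c_assign gN hn'

lemma satAN (hn : n < MM D)
    (hi : asgn i = cnode D n) (hj : asgn j = cnode D 0) :
    (FG D gN).SatC asgn (ceq [.assign] i [.new] j) := by
  refine ⟨tnode D 0, ?_, ?_⟩ <;> simp only [ceq]
  · rw [hi, follow_one]; exact ged_c_assign gN hn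
  · rw [hj, follow_one]; exact ged_c_new gN (MM_pos D)

lemma satA0 (hn : n < MM D) (h2 : 2 * n + 1 < MM D)
    (hi : asgn i = cnode D n) (hj : asgn j = cnode D (2 * n + 1)) :
    (FG D gN).SatC asgn (ceq [.a0, .new] i [.new] j) := by
  refine ⟨tnode D (2 * n + 1), ?_, ?_⟩ <;> simp only [ceq]
  · rw [hi, follow_two]
    show (ged D gN (cnode D n) .a0).bind _ = _
    rw [ged_c_a0 gN hn h2]
    show ged D gN (cnode D (2 * n + 1)) .new = _
    rw [ged_c_new gN h2]
  · rw [hj, follow_one]; exact ged_c_new gN h2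

lemma satA1 (hn : n < MM D) (h2 : 2 * n + 2 < MM D)
    (hi : asgn i = cnode D n) (hj : asgn j = cnode D (2 * n + 2)) :
    (FG D gN).SatC asgn (ceq [.a1, .new] i [.new] j) := by
  refine ⟨tnode D (2 * n + 2), ?_, ?_⟩ <;> simp only [ceq]
  · rw [hi, follow_two]
    show (ged D gN (cnode D n) .a1).bind _ = _
    rw [ged_c_a1 gN hn h2]
    show ged D gN (cnode D (2 * n + 2)) .new = _
    rw [ged_c_new gN h2]
  · rw [hj, follow_one]; exact ged_c_new gN h2

lemma val_aP : (FG D gN).val (aP D) = some Atom.plus := by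
  show gvalf D (aP D) = _
  unfold gvalf aP
  rw [if_pos rfl]

lemma val_aM : (FG D gN).val (aM D) = some Atom.minus := by
  show gvalf D (aM D) = _
  unfold gvalf aM
  have := MM_pos D
  rw [if_neg (by simp), if_pos rfl]

lemma satNV_true (hn : n < MM D) (hg : gN n = true) (hi : asgn i = cnode D n) :
    (FG D gN).SatC asgn (cat [.new, .v] i .plus) := by
  refine ⟨rfl, aP D, ?_, val_aP⟩
  simp only [cat]
  rw [hi, follow_two]
  show (ged D gN (cnode D n) .new).bind _ = _
  rw [ged_c_new gN hn]
  show ged D gN (tnode D n) .v = _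
  rw [ged_t_v gN hn, hg]
  simp

lemma satNV_false (hn : n < MM D) (hg : gN n = false) (hi : asgn i = cnode D n) :
    (FG D gN).SatC asgn (cat [.new, .v] i .minus) := by
  refine ⟨rfl, aM D, ?_, val_aM⟩
  simp only [cat]
  rw [hi, follow_two]
  show (ged D gN (cnode D n) .new).bind _ = _
  rw [ged_c_new gN hn]
  show ged D gN (tnode D n) .v = _
  rw [ged_t_v gN hn, hg]
  simp

lemma satAV (hg0 : gN 0 = true) (hn : n < MM D) (hi : asgn i = cnode D n) :
    (FG D gN).SatC asgn (cat [.assign, .v] i .plus) := by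
  refine ⟨rfl, aP D, ?_, val_aP⟩
  simp only [cat]
  rw [hi, follow_two]
  show (ged D gN (cnode D n) .assign).bind _ = _
  rw [ged_c_assign gN hn]
  show ged D gN (tnode D 0) .v = _
  rw [ged_t_v gN (MM_pos D), hg0]
  simp

end Sat

/-! ### The Reach predicate -/

def Reach (D : ℕ) (gN : ℕ → Bool) (N : NTm) (w : List Sig) (n : ℕ) : Prop :=
  ∀ (i : ℕ) (asgn : ℕ → Fin (KK D)), asgn i = cnode D n →
    ∃ cs, ∃ asgn' : ℕ → Fin (KK D), DerivC N w i cs ∧ (∀ j ≤ i, asgn' j = asgn j) ∧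
      ∀ c ∈ cs, (FG D gN).SatC asgn' c

lemma reach_cons {D : ℕ} {gN : ℕ → Bool} {N' : NTm} {w' : List Sig} {n' : ℕ}
    {N : NTm} {w : List Sig} {n : ℕ}
    (F : ℕ → List FConstraint)
    (hder : ∀ i cs, DerivC N' w' (i + 1) cs → DerivC N w i (F i ++ cs))
    (hsat : ∀ (i : ℕ) (asgn : ℕ → Fin (KK D)), asgn i = cnode D n →
        asgn (i + 1) = cnode D n' → ∀ c ∈ F i, (FG D gN).SatC asgn c)
    (h : Reach D gN N' w' n') : Reach D gN N w n := by
  intro i asgn hi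
  obtain ⟨cs, asgn', hd, hag, hs⟩ :=
    h (i + 1) (Function.update asgn (i + 1) (cnode D n')) (by simp)
  refine ⟨F i ++ cs, asgn', hder i cs hd, ?_, ?_⟩
  · intro j hj
    rw [hag j (by omega), Function.update_of_ne (by omega)]
  · intro c hc
    rcases List.mem_append.1 hc with hc | hc
    · refine hsat i asgn' ?_ ?_ c hc
      · rw [hag i (by omega), Function.update_of_ne (by omega), hi]
      · rw [hag (i + 1) le_rfl]; simp
    · exact hs c hc

/-! ### Per-rule Reach lemmas -/

section Rules

variable {D : ℕ} {gN : ℕ → Bool} {w : List Sig}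

-- handler for rules whose only constraint is assign-assign
lemma hsatAA {n n' : ℕ} (hn : n < MM D) (hn' : n' < MM D) :
    ∀ (i : ℕ) (asgn : ℕ → Fin (KK D)), asgn i = cnode D n → asgn (i + 1) = cnode D n' →
      ∀ c ∈ [ceq [.assign] i [.assign] (i + 1)], (FG D gN).SatC asgn c := by
  intro i asgn hi hj c hc
  rw [List.mem_singleton] at hc
  subst hc
  exact satAA hn hn' hi hj

lemma hsatANN {n : ℕ} (hn : n < MM D) :
    ∀ (i : ℕ) (asgn : ℕ → Fin (KK D)), asgn i = cnode D n → asgn (i + 1) = cnode D 0 →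
      ∀ c ∈ [ceq [.assign] i [.assign] (i + 1), ceq [.assign] i [.new] (i + 1)],
        (FG D gN).SatC asgn c := by
  intro i asgn hi hj c hc
  rcases List.mem_pair.1 hc with rfl | rfl
  · exact satAA hn (MM_pos D) hi hj
  · exact satAN hn hi hj

lemma reach_eps (hg0 : gN 0 = true) : Reach D gN .S [] 0 := by
  intro i asgn hi
  refine ⟨_, asgn, DerivC.sEps, fun j _ => rfl, ?_⟩
  intro c hc
  rw [List.mem_singleton] at hc
  subst hc
  exact satAV hg0 (MM_pos D) hi

lemma reach_sF (h : Reach D gN .F w 0) : Reach D gN .S (.hash :: w) 0 :=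
  reach_cons _ (fun _ _ hd => DerivC.sF hd) (hsatAA (MM_pos D) (MM_pos D)) h

lemma reach_sT (h : Reach D gN .T w 0) : Reach D gN .S (.hash :: w) 0 :=
  reach_cons _ (fun _ _ hd => DerivC.sT hd) (hsatANN (MM_pos D)) h

lemma reach_f0 (h : Reach D gN .F w 0) : Reach D gN .F (.zero :: w) 0 :=
  reach_cons _ (fun _ _ hd => DerivC.f0 hd) (hsatAA (MM_pos D) (MM_pos D)) h

lemma reach_f1 (h : Reach D gN .F w 0) : Reach D gN .F (.one :: w) 0 :=
  reach_cons _ (fun _ _ hd => DerivC.f1 hd) (hsatAA (MM_pos D) (MM_pos D)) h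

lemma reach_fp (h : Reach D gN .F w 0) : Reach D gN .F (.pos :: w) 0 :=
  reach_cons _ (fun _ _ hd => DerivC.fp hd) (hsatAA (MM_pos D) (MM_pos D)) h

lemma reach_fn (h : Reach D gN .F w 0) : Reach D gN .F (.neg :: w) 0 :=
  reach_cons _ (fun _ _ hd => DerivC.fn hd) (hsatAA (MM_pos D) (MM_pos D)) h

lemma reach_fpT (h : Reach D gN .T w 0) : Reach D gN .F (.pos :: w) 0 :=
  reach_cons _ (fun _ _ hd => DerivC.fpT hd) (hsatANN (MM_pos D)) h

lemma reach_fnT (h : Reach D gN .T w 0) : Reach D gN .F (.neg :: w) 0 :=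
  reach_cons _ (fun _ _ hd => DerivC.fnT hd) (hsatANN (MM_pos D)) h

lemma reach_t0 {n : ℕ} (hn : n < MM D) (h2 : 2 * n + 1 < MM D)
    (h : Reach D gN .T w (2 * n + 1)) : Reach D gN .T (.zero :: w) n := by
  refine reach_cons
    (fun i => [ceq [.assign] i [.assign] (i + 1), ceq [.a0, .new] i [.new] (i + 1)])
    (fun _ _ hd => DerivC.t0 hd) ?_ h
  intro i asgn hi hj c hc
  rcases List.mem_pair.1 hc with rfl | rfl
  · exact satAA hn h2 hi hj
  · exact satA0 hn h2 hi hj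

lemma reach_t1 {n : ℕ} (hn : n < MM D) (h2 : 2 * n + 2 < MM D)
    (h : Reach D gN .T w (2 * n + 2)) : Reach D gN .T (.one :: w) n := by
  refine reach_cons
    (fun i => [ceq [.assign] i [.assign] (i + 1), ceq [.a1, .new] i [.new] (i + 1)])
    (fun _ _ hd => DerivC.t1 hd) ?_ h
  intro i asgn hi hj c hc
  rcases List.mem_pair.1 hc with rfl | rfl
  · exact satAA hn h2 hi hj
  · exact satA1 hn h2 hi hj

lemma reach_tpA {n : ℕ} (hn : n < MM D) (hg : gN n = true)
    (h : Reach D gN .A w 0) : Reach D gN .T (.pos :: w) n := by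
  refine reach_cons
    (fun i => [ceq [.assign] i [.assign] (i + 1), cat [.new, .v] i .plus])
    (fun _ _ hd => DerivC.tpA hd) ?_ h
  intro i asgn hi hj c hc
  rcases List.mem_pair.1 hc with rfl | rfl
  · exact satAA hn (MM_pos D) hi hj
  · exact satNV_true hn hg hi

lemma reach_tnA {n : ℕ} (hn : n < MM D) (hg : gN n = false)
    (h : Reach D gN .A w 0) : Reach D gN .T (.neg :: w) n := by
  refine reach_cons
    (fun i => [ceq [.assign] i [.assign] (i + 1), cat [.new, .v] i .minus])
    (fun _ _ hd => DerivC.tnA hd) ?_ h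
  intro i asgn hi hj c hc
  rcases List.mem_pair.1 hc with rfl | rfl
  · exact satAA hn (MM_pos D) hi hj
  · exact satNV_false hn hg hi

lemma reach_aB (h : Reach D gN .B w 0) : Reach D gN .A w 0 :=
  reach_cons _ (fun _ _ hd => DerivC.aB hd) (hsatAA (MM_pos D) (MM_pos D)) h

lemma reach_aS (h : Reach D gN .S w 0) : Reach D gN .A w 0 :=
  reach_cons _ (fun _ _ hd => DerivC.aS hd) (hsatAA (MM_pos D) (MM_pos D)) h

lemma reach_b0 (h : Reach D gN .B w 0) : Reach D gN .B (.zero :: w) 0 :=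
  reach_cons _ (fun _ _ hd => DerivC.b0 hd) (hsatAA (MM_pos D) (MM_pos D)) h

lemma reach_b1 (h : Reach D gN .B w 0) : Reach D gN .B (.one :: w) 0 :=
  reach_cons _ (fun _ _ hd => DerivC.b1 hd) (hsatAA (MM_pos D) (MM_pos D)) h

lemma reach_bpA (h : Reach D gN .A w 0) : Reach D gN .B (.pos :: w) 0 :=
  reach_cons _ (fun _ _ hd => DerivC.bpA hd) (hsatAA (MM_pos D) (MM_pos D)) h

lemma reach_bnA (h : Reach D gN .A w 0) : Reach D gN .B (.neg :: w) 0 :=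
  reach_cons _ (fun _ _ hd => DerivC.bnA hd) (hsatAA (MM_pos D) (MM_pos D)) h

end Rules

/-! ### Composite derivation lemmas -/

section Comp

variable {D : ℕ} {gN : ℕ → Bool} {w : List Sig}

lemma reach_B_bits (u : List Bool) (h : Reach D gN .B w 0) :
    Reach D gN .B (u.map bitSig ++ w) 0 := by
  induction u with
  | nil => simpa using h
  | cons bit u ih =>
    cases bit
    · exact reach_b0 ih
    · exact reach_b1 ih

lemma reach_B_lit (l : Lit) (h : Reach D gN .A w 0) : Reach D gN .B (fLit l ++ w) 0 := by
  have e : fLit l ++ w = l.1.map bitSig ++ ((if l.2 then Sig.pos else Sig.neg) :: w) := by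
    simp [fLit]
  rw [e]
  apply reach_B_bits
  cases hl2 : l.2
  · simpa using reach_bnA h
  · simpa using reach_bpA h

lemma reach_A_lits (ls : List Lit) (h : Reach D gN .S w 0) :
    Reach D gN .A ((ls.map fLit).flatten ++ w) 0 := by
  induction ls with
  | nil => simpa using reach_aS h
  | cons l ls ih =>
    have e : (((l :: ls).map fLit).flatten ++ w) = fLit l ++ ((ls.map fLit).flatten ++ w) := by
      simp
    rw [e]
    exact reach_aB (reach_B_lit l ih)

lemma reach_T_lit (b : List Bool) (sgn : Bool) (n : ℕ) (hn : n < MM D)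
    (hfit : encF n b < MM D) (hval : gN (encF n b) = sgn)
    (h : Reach D gN .A w 0) :
    Reach D gN .T (b.map bitSig ++ (if sgn then Sig.pos else Sig.neg) :: w) n := by
  induction b generalizing n with
  | nil =>
    rw [encF_nil] at hfit hval
    cases sgn
    · exact reach_tnA hn hval h
    · exact reach_tpA hn hval h
  | cons bit b ih =>
    rw [encF_cons] at hfit hval
    have hc : 2 * n + 1 + cond bit 1 0 < MM D := lt_of_le_of_lt (encF_le _ b) hfit
    cases bit
    · simp only [Bool.cond_false, Nat.add_zero] at hfit hval hc
      exact reach_t0 hn hc (ih (2 * n + 1) hc hfit hval)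
    · simp only [Bool.cond_true] at hfit hval hc
      exact reach_t1 hn hc (ih (2 * n + 2) hc hfit hval)

lemma reach_F_bits (u : List Bool) (h : Reach D gN .F w 0) :
    Reach D gN .F (u.map bitSig ++ w) 0 := by
  induction u with
  | nil => simpa using h
  | cons bit u ih =>
    cases bit
    · exact reach_f0 ih
    · exact reach_f1 ih

lemma reach_F_lit (l : Lit) (h : Reach D gN .F w 0) : Reach D gN .F (fLit l ++ w) 0 := by
  have e : fLit l ++ w = l.1.map bitSig ++ ((if l.2 then Sig.pos else Sig.neg) :: w) := by
    simp [fLit]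
  rw [e]
  apply reach_F_bits
  cases hl2 : l.2
  · simpa using reach_fn h
  · simpa using reach_fp h

lemma reach_F_last (l : Lit) (h : Reach D gN .T w 0) : Reach D gN .F (fLit l ++ w) 0 := by
  have e : fLit l ++ w = l.1.map bitSig ++ ((if l.2 then Sig.pos else Sig.neg) :: w) := by
    simp [fLit]
  rw [e]
  apply reach_F_bits
  cases hl2 : l.2
  · simpa using reach_fnT h
  · simpa using reach_fpT h

lemma reach_F_pre (pre : List Lit) (hne : pre ≠ []) (h : Reach D gN .T w 0) :
    Reach D gN .F ((pre.map fLit).flatten ++ w) 0 := by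
  induction pre with
  | nil => exact absurd rfl hne
  | cons l ps ih =>
    cases ps with
    | nil => simpa using reach_F_last l h
    | cons l2 ps2 =>
      have e : (((l :: l2 :: ps2).map fLit).flatten ++ w)
          = fLit l ++ (((l2 :: ps2).map fLit).flatten ++ w) := by simp
      rw [e]
      exact reach_F_lit l (ih (by simp))

lemma reach_clause (γ : Clause) (pre post : List Lit) (l : Lit)
    (hγ : γ = pre ++ l :: post) (hfit : encF 0 l.1 < MM D)
    (hval : gN (encF 0 l.1) = l.2) (hS : Reach D gN .S w 0) :
    Reach D gN .S (.hash :: (fClause γ ++ w)) 0 := by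
  have hA := reach_A_lits post hS
  have hT : Reach D gN .T (fLit l ++ ((post.map fLit).flatten ++ w)) 0 := by
    have h := reach_T_lit l.1 l.2 0 (MM_pos D) hfit hval hA
    have e : fLit l ++ ((post.map fLit).flatten ++ w)
        = l.1.map bitSig ++
          ((if l.2 then Sig.pos else Sig.neg) :: ((post.map fLit).flatten ++ w)) := by
      simp [fLit]
    rw [e]
    exact h
  subst hγ
  cases pre with
  | nil =>
    have e : fClause ([] ++ l :: post) ++ w = fLit l ++ ((post.map fLit).flatten ++ w) := by
      simp [fClause]
    rw [e]
    exact reach_sT hT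
  | cons p ps =>
    have e : fClause ((p :: ps) ++ l :: post) ++ w
        = ((p :: ps).map fLit).flatten ++ (fLit l ++ ((post.map fLit).flatten ++ w)) := by
      simp [fClause]
    rw [e]
    exact reach_sF (reach_F_pre (p :: ps) (by simp) hT)

lemma reach_cnf (hg0 : gN 0 = true) (φ : CNF)
    (H : ∀ γ ∈ φ, ∃ pre l post, γ = pre ++ l :: post ∧
      encF 0 l.1 < MM D ∧ gN (encF 0 l.1) = l.2) :
    Reach D gN .S (fCNF φ) 0 := by
  induction φ with
  | nil => simpa [fCNF] using reach_eps hg0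
  | cons γ φ ih =>
    obtain ⟨pre, l, post, h1, h2, h3⟩ := H γ (by simp)
    have e : fCNF (γ :: φ) = .hash :: (fClause γ ++ fCNF φ) := by simp [fCNF]
    rw [e]
    exact reach_clause γ pre post l h1 h2 h3 (ih (fun γ' hγ' => H γ' (by simp [hγ'])))

end Comp

lemma le_foldr_max {x : ℕ} {L : List ℕ} (h : x ∈ L) : x ≤ L.foldr max 0 := by
  induction L with
  | nil => simp at h
  | cons a L ih =>
    rcases List.mem_cons.1 h with rfl | h
    · exact le_max_left _ _
    · exact le_trans (ih h) (le_max_right _ _)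

end SatLG
/-- if a CNF formula φ is satisfiable then f(φ) ∈ L(G). -/
theorem sat_implies_fCNF_in_LG (φ : CNF) (hφ : CNF.WF φ) (hsat : CNFSat φ) :
    fCNF φ ∈ LG := by
  classical
  obtain ⟨g, hg⟩ := hsat
  set D : ℕ := ((φ.flatten).map (fun l => l.1.length)).foldr max 0 with hD
  set gN : ℕ → Bool := fun nn => if SatLG.dec nn = [] then true else g (SatLG.dec nn) with hgN
  have hg0 : gN 0 = true := by rw [hgN]; simp [SatLG.dec_zero]
  have H : ∀ γ ∈ φ, ∃ pre l post, γ = pre ++ l :: post ∧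
      SatLG.encF 0 l.1 < SatLG.MM D ∧ gN (SatLG.encF 0 l.1) = l.2 := by
    intro γ hγ
    obtain ⟨l, hl, hlt⟩ := hg γ hγ
    obtain ⟨pre, post, hsplit⟩ := List.append_of_mem hl
    refine ⟨pre, l, post, hsplit, ?_, ?_⟩
    · apply SatLG.encF_lt_MM
      have hmem : l ∈ φ.flatten := List.mem_flatten.2 ⟨_, hγ, hl⟩
      exact SatLG.le_foldr_max (List.mem_map_of_mem hmem)
    · rw [hgN]
      simp only
      rw [SatLG.dec_encF]
      have hne : l.1 ≠ [] := (hφ.2 γ hγ).2 l hl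
      rw [if_neg hne]
      exact hlt
  have R := SatLG.reach_cnf hg0 φ H
  obtain ⟨cs, asgn', hd, -, hs⟩ := R 0 (fun _ => SatLG.cnode D 0) rfl
  exact ⟨cs, hd, SatLG.KK D, SatLG.FG D gN, asgn', hs⟩
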